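/- arXiv:2212.14243 — 2 statements merged into one kernel-verified Lean document; each statement's English description precedes it below -/
import Mathlib

section
/- Let S: ℝ^N × ℝ^N → ℝ be smooth and suppose the relations p = ∂_q S(P,q), Q = ∂_P S(P,q) implicitly define a diffeomorphism Φ(p,q) = (P,Q). Then the Jacobian of Φ is symplectic at every point. -/
open Matrix

/-- J = [[0,-I],[I,0]] as a 2N×2N block matrix. -/
noncomputable def sympJ (N : ℕ) : Matrix (Fin N ⊕ Fin N) (Fin N ⊕ Fin N) ℝ :=
  Matrix.fromBlocks 0 (-1) 1 0

/-- Jacobian matrix of a map ℝ^{2N} → ℝ^{2N}. -/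
noncomputable def jacobian (N : ℕ)
    (Φ : ((Fin N ⊕ Fin N) → ℝ) → ((Fin N ⊕ Fin N) → ℝ))
    (x : (Fin N ⊕ Fin N) → ℝ) : Matrix (Fin N ⊕ Fin N) (Fin N ⊕ Fin N) ℝ :=
  Matrix.of fun i j => fderiv ℝ Φ x (Pi.single j 1) i

/-- Gradient of a scalar function on ℝ^{2N}. -/
noncomputable def grad (N : ℕ) (H : ((Fin N ⊕ Fin N) → ℝ) → ℝ)
    (x : (Fin N ⊕ Fin N) → ℝ) : (Fin N ⊕ Fin N) → ℝ :=
  fun i => fderiv ℝ H x (Pi.single i 1)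

/-- Partial gradient of S(P,q) with respect to the first group of variables P. -/
noncomputable def dP (N : ℕ) (S : (Fin N → ℝ) → (Fin N → ℝ) → ℝ)
    (P q : Fin N → ℝ) : Fin N → ℝ :=
  fun i => fderiv ℝ (fun P' => S P' q) P (Pi.single i 1)

/-- Partial gradient of S(P,q) with respect to the second group of variables q. -/
noncomputable def dq (N : ℕ) (S : (Fin N → ℝ) → (Fin N → ℝ) → ℝ)
    (P q : Fin N → ℝ) : Fin N → ℝ :=
  fun i => fderiv ℝ (fun q' => S P q') q (Pi.single i 1)


noncomputable def iota (N : ℕ) : ((Fin N → ℝ) × (Fin N → ℝ)) →L[ℝ] ((Fin N ⊕ Fin N) → ℝ) :=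
  ContinuousLinearMap.pi (fun i => Sum.rec
    (fun a => (ContinuousLinearMap.proj a).comp (ContinuousLinearMap.fst ℝ _ _))
    (fun b => (ContinuousLinearMap.proj b).comp (ContinuousLinearMap.snd ℝ _ _)) i)

lemma iota_apply {N : ℕ} (p q : Fin N → ℝ) : iota N (p, q) = Sum.elim p q := by
  funext i; cases i <;> rfl

noncomputable def pil (N : ℕ) : ((Fin N ⊕ Fin N) → ℝ) →L[ℝ] (Fin N → ℝ) :=
  ContinuousLinearMap.pi fun a => ContinuousLinearMap.proj (Sum.inl a)

noncomputable def pir (N : ℕ) : ((Fin N ⊕ Fin N) → ℝ) →L[ℝ] (Fin N → ℝ) :=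
  ContinuousLinearMap.pi fun a => ContinuousLinearMap.proj (Sum.inr a)

lemma iota_single_l {N : ℕ} (j : Fin N) :
    iota N (Pi.single j 1, 0) = Pi.single (Sum.inl j) 1 := by
  funext i; cases i with
  | inl a => simp [iota, Pi.single_apply, Sum.inl.injEq]
  | inr b => simp [iota, Pi.single_apply]

lemma iota_single_r {N : ℕ} (j : Fin N) :
    iota N (0, Pi.single j 1) = Pi.single (Sum.inr j) 1 := by
  funext i; cases i with
  | inl a => simp [iota, Pi.single_apply]
  | inr b => simp [iota, Pi.single_apply, Sum.inr.injEq]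

lemma expand_fst {N : ℕ} (T : ((Fin N → ℝ) × (Fin N → ℝ)) →L[ℝ] ℝ) (u : Fin N → ℝ) :
    T (u, 0) = ∑ k, u k * T (Pi.single k 1, 0) := by
  have hu : ((u, 0) : (Fin N → ℝ) × (Fin N → ℝ))
      = ∑ k, u k • ((Pi.single k 1 : Fin N → ℝ), (0 : Fin N → ℝ)) := by
    refine Prod.ext ?_ ?_ <;> simp [Prod.fst_sum, Prod.snd_sum]
    · funext a
      rw [Finset.sum_apply]
      simp [Pi.single_apply]
  rw [hu, map_sum]
  refine Finset.sum_congr rfl fun k _ => ?_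
  rw [T.map_smul, smul_eq_mul]

lemma dq_eq {N : ℕ} {S : (Fin N → ℝ) → (Fin N → ℝ) → ℝ}
    (hS : ContDiff ℝ (⊤ : ℕ∞) fun x : (Fin N → ℝ) × (Fin N → ℝ) => S x.1 x.2)
    (P q : Fin N → ℝ) (i : Fin N) :
    dq N S P q i
      = fderiv ℝ (fun z : (Fin N → ℝ) × (Fin N → ℝ) => S z.1 z.2) (P, q) (0, Pi.single i 1) := by
  have hf := (hS.differentiable (by simp) (P, q)).hasFDerivAt
  have hg : HasFDerivAt (fun q' : Fin N → ℝ => ((P, q') : (Fin N → ℝ) × (Fin N → ℝ)))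
      (ContinuousLinearMap.prod 0 (ContinuousLinearMap.id ℝ _)) q :=
    HasFDerivAt.prodMk (hasFDerivAt_const P q) (hasFDerivAt_id q)
  have h2 : HasFDerivAt (fun q' => S P q')
      ((fderiv ℝ (fun z : (Fin N → ℝ) × (Fin N → ℝ) => S z.1 z.2) (P, q)).comp
        (ContinuousLinearMap.prod 0 (ContinuousLinearMap.id ℝ _))) q := hf.comp q hg
  show fderiv ℝ (fun q' => S P q') q (Pi.single i 1) = _
  rw [h2.fderiv]
  simp

lemma dP_eq {N : ℕ} {S : (Fin N → ℝ) → (Fin N → ℝ) → ℝ}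
    (hS : ContDiff ℝ (⊤ : ℕ∞) fun x : (Fin N → ℝ) × (Fin N → ℝ) => S x.1 x.2)
    (P q : Fin N → ℝ) (i : Fin N) :
    dP N S P q i
      = fderiv ℝ (fun z : (Fin N → ℝ) × (Fin N → ℝ) => S z.1 z.2) (P, q) (Pi.single i 1, 0) := by
  have hf := (hS.differentiable (by simp) (P, q)).hasFDerivAt
  have hg : HasFDerivAt (fun P' : Fin N → ℝ => ((P', q) : (Fin N → ℝ) × (Fin N → ℝ)))
      (ContinuousLinearMap.prod (ContinuousLinearMap.id ℝ _) 0) P :=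
    HasFDerivAt.prodMk (hasFDerivAt_id P) (hasFDerivAt_const q P)
  have h2 : HasFDerivAt (fun P' => S P' q)
      ((fderiv ℝ (fun z : (Fin N → ℝ) × (Fin N → ℝ) => S z.1 z.2) (P, q)).comp
        (ContinuousLinearMap.prod (ContinuousLinearMap.id ℝ _) 0)) P :=
      HasFDerivAt.comp (g := fun z : (Fin N → ℝ) × (Fin N → ℝ) => S z.1 z.2) P hf hg
  show fderiv ℝ (fun P' => S P' q) P (Pi.single i 1) = _
  rw [h2.fderiv]
  simp

theorem generating_function_gives_symplectic_jacobian (N : ℕ)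
    (S : (Fin N → ℝ) → (Fin N → ℝ) → ℝ)
    (hS : ContDiff ℝ (⊤ : ℕ∞) fun x : (Fin N → ℝ) × (Fin N → ℝ) => S x.1 x.2)
    (Φ Ψ : ((Fin N ⊕ Fin N) → ℝ) → ((Fin N ⊕ Fin N) → ℝ))
    (hΦ : ContDiff ℝ (⊤ : ℕ∞) Φ) (hΨ : ContDiff ℝ (⊤ : ℕ∞) Ψ)
    (hleft : Function.LeftInverse Ψ Φ) (hright : Function.RightInverse Ψ Φ)
    (hchar : ∀ p q P Q : Fin N → ℝ,
      Φ (Sum.elim p q) = Sum.elim P Q ↔ p = dq N S P q ∧ Q = dP N S P q) :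
    ∀ x, jacobian N Φ x * sympJ N * (jacobian N Φ x)ᵀ = sympJ N := by
  intro x
  classical
  have hΦd : Differentiable ℝ Φ := hΦ.differentiable (by simp)
  have hgrad : ContDiff ℝ (⊤ : ℕ∞) (fderiv ℝ (fun z : (Fin N → ℝ) × (Fin N → ℝ) => S z.1 z.2)) :=
    hS.fderiv_right (by simp)
  -- components of Φ
  set A : (Fin N → ℝ) × (Fin N → ℝ) → (Fin N → ℝ) := fun z => pil N (Φ (iota N z)) with hAdef
  set B : (Fin N → ℝ) × (Fin N → ℝ) → (Fin N → ℝ) := fun z => pir N (Φ (iota N z)) with hBdef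
  have hABelim : ∀ z, Φ (iota N z) = Sum.elim (A z) (B z) := by
    intro z; funext i; cases i <;> rfl
  have himp : ∀ z : (Fin N → ℝ) × (Fin N → ℝ),
      z.1 = dq N S (A z) z.2 ∧ B z = dP N S (A z) z.2 := by
    intro z
    refine (hchar z.1 z.2 (A z) (B z)).mp ?_
    rw [← iota_apply z.1 z.2]
    exact hABelim z
  -- base point
  set p0 : Fin N → ℝ := fun a => x (Sum.inl a) with hp0
  set q0 : Fin N → ℝ := fun a => x (Sum.inr a) with hq0
  set z0 : (Fin N → ℝ) × (Fin N → ℝ) := (p0, q0) with hz0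
  have hx : iota N z0 = x := by funext i; cases i <;> rfl
  set DΦ : ((Fin N ⊕ Fin N) → ℝ) →L[ℝ] ((Fin N ⊕ Fin N) → ℝ) := fderiv ℝ Φ x with hDΦ
  have hΦx : HasFDerivAt Φ DΦ (iota N z0) := by rw [hx]; exact (hΦd x).hasFDerivAt
  set DA : ((Fin N → ℝ) × (Fin N → ℝ)) →L[ℝ] (Fin N → ℝ) :=
    (pil N).comp (DΦ.comp (iota N)) with hDA
  set DB : ((Fin N → ℝ) × (Fin N → ℝ)) →L[ℝ] (Fin N → ℝ) :=
    (pir N).comp (DΦ.comp (iota N)) with hDB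
  have hiotacomp : HasFDerivAt (fun z => Φ (iota N z)) (DΦ.comp (iota N)) z0 :=
    hΦx.comp z0 ((iota N).hasFDerivAt)
  have hAz : HasFDerivAt A DA z0 := (pil N).hasFDerivAt.comp z0 hiotacomp
  have hBz : HasFDerivAt B DB z0 := (pir N).hasFDerivAt.comp z0 hiotacomp
  set P0 : Fin N → ℝ := A z0 with hP0
  set H : ((Fin N → ℝ) × (Fin N → ℝ)) →L[ℝ] (((Fin N → ℝ) × (Fin N → ℝ)) →L[ℝ] ℝ) :=
    fderiv ℝ (fderiv ℝ (fun z : (Fin N → ℝ) × (Fin N → ℝ) => S z.1 z.2)) (P0, q0) with hH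
  have hgradd : HasFDerivAt (fderiv ℝ (fun z : (Fin N → ℝ) × (Fin N → ℝ) => S z.1 z.2))
      H (P0, q0) := (hgrad.differentiable (by simp) _).hasFDerivAt
  have hsym : ∀ v w, H v w = H w v := by
    have h2 : ContDiffAt ℝ 2 (fun z : (Fin N → ℝ) × (Fin N → ℝ) => S z.1 z.2) (P0, q0) :=
      hS.contDiffAt.of_le (WithTop.coe_le_coe.mpr le_top)
    exact h2.isSymmSndFDerivAt (by simp)
  -- θ
  set θ : (Fin N → ℝ) × (Fin N → ℝ) → (Fin N → ℝ) × (Fin N → ℝ) :=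
    fun z => (A z, z.2) with hθdef
  set Dθ : ((Fin N → ℝ) × (Fin N → ℝ)) →L[ℝ] ((Fin N → ℝ) × (Fin N → ℝ)) :=
    DA.prod (ContinuousLinearMap.snd ℝ _ _) with hDθ
  have hθz : HasFDerivAt θ Dθ z0 := HasFDerivAt.prodMk hAz hasFDerivAt_snd
  have hθ0 : θ z0 = (P0, q0) := rfl
  have hG1 : HasFDerivAt
      (fun z => fderiv ℝ (fun z : (Fin N → ℝ) × (Fin N → ℝ) => S z.1 z.2) (θ z))
      (H.comp Dθ) z0 := by
    have h := hgradd
    rw [← hθ0] at h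
    exact h.comp z0 hθz
  have hDθw : ∀ w : (Fin N → ℝ) × (Fin N → ℝ), Dθ w = (DA w, w.2) := fun w => rfl
  -- key identities from differentiating the implicit relations
  have key1 : ∀ (i : Fin N) (w : (Fin N → ℝ) × (Fin N → ℝ)),
      H (Dθ w) (0, Pi.single i 1) = w.1 i := by
    intro i
    have hcomp : HasFDerivAt
        (fun z => fderiv ℝ (fun z : (Fin N → ℝ) × (Fin N → ℝ) => S z.1 z.2) (θ z)
          ((0 : Fin N → ℝ), Pi.single i 1))
        ((fderiv ℝ (fun z : (Fin N → ℝ) × (Fin N → ℝ) => S z.1 z.2) (θ z0)).comp 0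
          + (H.comp Dθ).flip ((0 : Fin N → ℝ), Pi.single i 1)) z0 :=
      hG1.clm_apply (hasFDerivAt_const _ _)
    have heqfun : (fun z => fderiv ℝ (fun z : (Fin N → ℝ) × (Fin N → ℝ) => S z.1 z.2) (θ z)
          ((0 : Fin N → ℝ), Pi.single i 1))
        = fun z : (Fin N → ℝ) × (Fin N → ℝ) => z.1 i := by
      funext z
      have h1 : z.1 i = dq N S (A z) z.2 i := congrFun (himp z).1 i
      rw [dq_eq hS] at h1
      exact h1.symm
    rw [heqfun] at hcomp
    have hlin : HasFDerivAt (fun z : (Fin N → ℝ) × (Fin N → ℝ) => z.1 i)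
        ((ContinuousLinearMap.proj i).comp
          (ContinuousLinearMap.fst ℝ (Fin N → ℝ) (Fin N → ℝ))) z0 :=
      ((ContinuousLinearMap.proj i).comp
        (ContinuousLinearMap.fst ℝ (Fin N → ℝ) (Fin N → ℝ))).hasFDerivAt
    have huniq := hcomp.unique hlin
    intro w
    have h3 := DFunLike.congr_fun huniq w
    simpa using h3
  have key2 : ∀ (j : Fin N) (w : (Fin N → ℝ) × (Fin N → ℝ)),
      H (Dθ w) (Pi.single j 1, 0) = DB w j := by
    intro j
    have hcomp : HasFDerivAt
        (fun z => fderiv ℝ (fun z : (Fin N → ℝ) × (Fin N → ℝ) => S z.1 z.2) (θ z)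
          (Pi.single j 1, (0 : Fin N → ℝ)))
        ((fderiv ℝ (fun z : (Fin N → ℝ) × (Fin N → ℝ) => S z.1 z.2) (θ z0)).comp 0
          + (H.comp Dθ).flip (Pi.single j 1, (0 : Fin N → ℝ))) z0 :=
      hG1.clm_apply (hasFDerivAt_const _ _)
    have heqfun : (fun z => fderiv ℝ (fun z : (Fin N → ℝ) × (Fin N → ℝ) => S z.1 z.2) (θ z)
          (Pi.single j 1, (0 : Fin N → ℝ)))
        = fun z : (Fin N → ℝ) × (Fin N → ℝ) => B z j := by
      funext z
      have h1 : B z j = dP N S (A z) z.2 j := congrFun (himp z).2 j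
      rw [dP_eq hS] at h1
      exact h1.symm
    rw [heqfun] at hcomp
    have hlin : HasFDerivAt (fun z => B z j)
        ((ContinuousLinearMap.proj j).comp DB) z0 :=
      (ContinuousLinearMap.proj j : (Fin N → ℝ) →L[ℝ] ℝ).hasFDerivAt.comp z0 hBz
    have huniq := hcomp.unique hlin
    intro w
    have h3 := DFunLike.congr_fun huniq w
    simpa using h3
  -- matrices
  set Ap : Matrix (Fin N) (Fin N) ℝ :=
    Matrix.of (fun i j => DA (Pi.single j 1, 0) i) with hApdef
  set Aq : Matrix (Fin N) (Fin N) ℝ :=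
    Matrix.of (fun i j => DA (0, Pi.single j 1) i) with hAqdef
  set Bp : Matrix (Fin N) (Fin N) ℝ :=
    Matrix.of (fun i j => DB (Pi.single j 1, 0) i) with hBpdef
  set Bq : Matrix (Fin N) (Fin N) ℝ :=
    Matrix.of (fun i j => DB (0, Pi.single j 1) i) with hBqdef
  set Cm : Matrix (Fin N) (Fin N) ℝ :=
    Matrix.of (fun i j => H (Pi.single j 1, 0) (0, Pi.single i 1)) with hCmdef
  set Dm : Matrix (Fin N) (Fin N) ℝ :=
    Matrix.of (fun i j => H (0, Pi.single j 1) (0, Pi.single i 1)) with hDmdef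
  set Em : Matrix (Fin N) (Fin N) ℝ :=
    Matrix.of (fun i j => H (Pi.single j 1, 0) (Pi.single i 1, 0)) with hEmdef
  have hsplit : ∀ (u v : Fin N → ℝ) (y : (Fin N → ℝ) × (Fin N → ℝ)),
      H (u, v) y = H (u, 0) y + H (0, v) y := by
    intro u v y
    have : ((u, v) : (Fin N → ℝ) × (Fin N → ℝ)) = (u, 0) + (0, v) := by simp
    rw [this, map_add, ContinuousLinearMap.add_apply]
  have hexp1 : ∀ (u : Fin N → ℝ) (i : Fin N),
      H (u, 0) (0, Pi.single i 1) = ∑ k, u k * Cm i k := by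
    intro u i
    have := expand_fst (H.flip ((0 : Fin N → ℝ), Pi.single i 1)) u
    simpa [hCmdef] using this
  have hexp2 : ∀ (u : Fin N → ℝ) (i : Fin N),
      H (u, 0) (Pi.single i 1, 0) = ∑ k, u k * Em i k := by
    intro u i
    have := expand_fst (H.flip (Pi.single i 1, (0 : Fin N → ℝ))) u
    simpa [hEmdef] using this
  -- matrix relations
  have hR1 : Cm * Ap = 1 := by
    ext i j
    have hk := key1 i (Pi.single j 1, 0)
    rw [hDθw] at hk
    simp only at hk
    rw [hexp1] at hk
    rw [Matrix.mul_apply, Matrix.one_apply]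
    have hcm : ∑ k, Cm i k * Ap k j = ∑ k, DA (Pi.single j 1, 0) k * Cm i k := by
      simp only [hApdef, Matrix.of_apply]
      exact Finset.sum_congr rfl fun k _ => mul_comm _ _
    rw [hcm, hk]
    simp [Pi.single_apply]
  have hR2 : Cm * Aq = -Dm := by
    ext i j
    have hk := key1 i ((0 : Fin N → ℝ), Pi.single j 1)
    rw [hDθw] at hk
    simp only at hk
    rw [hsplit, hexp1] at hk
    rw [Matrix.mul_apply, Matrix.neg_apply]
    have hcm : ∑ k, Cm i k * Aq k j = ∑ k, DA ((0 : Fin N → ℝ), Pi.single j 1) k * Cm i k := by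
      simp only [hAqdef, Matrix.of_apply]
      exact Finset.sum_congr rfl fun k _ => mul_comm _ _
    have hdm : Dm i j = H ((0 : Fin N → ℝ), Pi.single j 1) ((0 : Fin N → ℝ), Pi.single i 1) := by
      simp [hDmdef]
    rw [hcm, hdm]
    have := hk
    simp only [Pi.zero_apply] at this
    linarith [this]
  have hR3 : Em * Ap = Bp := by
    ext i j
    have hk := key2 i (Pi.single j 1, 0)
    rw [hDθw] at hk
    simp only at hk
    rw [hexp2] at hk
    rw [Matrix.mul_apply]
    have hcm : ∑ k, Em i k * Ap k j = ∑ k, DA (Pi.single j 1, 0) k * Em i k := by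
      simp only [hApdef, Matrix.of_apply]
      exact Finset.sum_congr rfl fun k _ => mul_comm _ _
    rw [hcm, hk]
    simp [hBpdef]
  have hR4 : Em * Aq + Cmᵀ = Bq := by
    ext i j
    have hk := key2 i ((0 : Fin N → ℝ), Pi.single j 1)
    rw [hDθw] at hk
    simp only at hk
    rw [hsplit, hexp2] at hk
    rw [Matrix.add_apply, Matrix.mul_apply, Matrix.transpose_apply]
    have hcm : ∑ k, Em i k * Aq k j = ∑ k, DA ((0 : Fin N → ℝ), Pi.single j 1) k * Em i k := by
      simp only [hAqdef, Matrix.of_apply]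
      exact Finset.sum_congr rfl fun k _ => mul_comm _ _
    have hcmt : Cm j i = H ((0 : Fin N → ℝ), Pi.single j 1) (Pi.single i 1, (0 : Fin N → ℝ)) := by
      rw [hsym]
      simp [hCmdef]
    rw [hcm, hcmt, hk]
    simp [hBqdef]
  have hDmT : Dmᵀ = Dm := by
    ext i j
    rw [Matrix.transpose_apply]
    simp only [hDmdef, Matrix.of_apply]
    exact hsym _ _
  have hEmT : Emᵀ = Em := by
    ext i j
    rw [Matrix.transpose_apply]
    simp only [hEmdef, Matrix.of_apply]
    exact hsym _ _
  -- jacobian in block form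
  have hM : jacobian N Φ x = Matrix.fromBlocks Ap Aq Bp Bq := by
    ext i j
    cases i with
    | inl a =>
      cases j with
      | inl b =>
        rw [Matrix.fromBlocks_apply₁₁]
        show fderiv ℝ Φ x (Pi.single (Sum.inl b) 1) (Sum.inl a) = Ap a b
        rw [← iota_single_l b]
        rfl
      | inr b =>
        rw [Matrix.fromBlocks_apply₁₂]
        show fderiv ℝ Φ x (Pi.single (Sum.inr b) 1) (Sum.inl a) = Aq a b
        rw [← iota_single_r b]
        rfl
    | inr a =>
      cases j with
      | inl b =>
        rw [Matrix.fromBlocks_apply₂₁]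
        show fderiv ℝ Φ x (Pi.single (Sum.inl b) 1) (Sum.inr a) = Bp a b
        rw [← iota_single_l b]
        rfl
      | inr b =>
        rw [Matrix.fromBlocks_apply₂₂]
        show fderiv ℝ Φ x (Pi.single (Sum.inr b) 1) (Sum.inr a) = Bq a b
        rw [← iota_single_r b]
        rfl
  -- the linear algebra
  have hApC : Ap * Cm = 1 := mul_eq_one_comm.mp hR1
  have hCT : Cmᵀ * Apᵀ = 1 := by
    rw [← Matrix.transpose_mul, hApC, Matrix.transpose_one]
  have hAqeq : Aq = -(Ap * Dm) := by
    calc Aq = 1 * Aq := (one_mul _).symm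
      _ = Ap * Cm * Aq := by rw [hApC]
      _ = Ap * (Cm * Aq) := by rw [Matrix.mul_assoc]
      _ = Ap * (-Dm) := by rw [hR2]
      _ = -(Ap * Dm) := by rw [Matrix.mul_neg]
  have hskew : Aq * Apᵀ + -(Ap * Aqᵀ) = 0 := by
    rw [hAqeq, Matrix.transpose_neg, Matrix.transpose_mul, hDmT]
    noncomm_ring
  rw [hM, sympJ, Matrix.fromBlocks_transpose, Matrix.fromBlocks_multiply,
    Matrix.fromBlocks_multiply]
  simp only [Matrix.mul_zero, Matrix.zero_mul, Matrix.mul_one, Matrix.one_mul,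
    Matrix.mul_neg, Matrix.neg_mul, Matrix.mul_one, add_zero, zero_add]
  rw [Matrix.fromBlocks_inj]
  refine ⟨hskew, ?_, ?_, ?_⟩
  · rw [← hR3, ← hR4, Matrix.transpose_mul, Matrix.transpose_add, Matrix.transpose_mul,
      Matrix.transpose_transpose]
    have expand : Aq * (Apᵀ * Emᵀ) + -(Ap * (Aqᵀ * Emᵀ + Cm))
        = (Aq * Apᵀ + -(Ap * Aqᵀ)) * Emᵀ + -(Ap * Cm) := by noncomm_ring
    rw [expand, hskew, hApC]
    simp
  · rw [← hR3, ← hR4]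
    have expand : (Em * Aq + Cmᵀ) * Apᵀ + -(Em * Ap * Aqᵀ)
        = Em * (Aq * Apᵀ + -(Ap * Aqᵀ)) + Cmᵀ * Apᵀ := by noncomm_ring
    rw [expand, hskew, hCT]
    simp
  · rw [← hR3, ← hR4, Matrix.transpose_mul, Matrix.transpose_add, Matrix.transpose_mul,
      Matrix.transpose_transpose]
    have expand : (Em * Aq + Cmᵀ) * (Apᵀ * Emᵀ) + -(Em * Ap * (Aqᵀ * Emᵀ + Cm))
        = Em * (Aq * Apᵀ + -(Ap * Aqᵀ)) * Emᵀ + Cmᵀ * Apᵀ * Emᵀ + -(Em * (Ap * Cm)) := by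
      noncomm_ring
    rw [expand, hskew, hCT, hApC]
    simp [hEmT]
end

section
/- Under the same hypotheses, the identity (∂Φ₁/∂p)⁻ᵀ = -(∂Φ₂/∂p)(∂Φ₁/∂p)⁻¹(∂Φ₁/∂q) + ∂Φ₂/∂q holds (i.e., the 'mixed' block of the implicit Jacobian equals the inverse transpose of ∂Φ₁/∂p). -/
open Matrix

/-- The p-p block of the Jacobian of Φ : ℝ^{2N} → ℝ^{2N}. -/
noncomputable def blockA (N : ℕ)
    (Φ : ((Fin N ⊕ Fin N) → ℝ) → ((Fin N ⊕ Fin N) → ℝ))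
    (x : (Fin N ⊕ Fin N) → ℝ) : Matrix (Fin N) (Fin N) ℝ :=
  Matrix.of fun i j => fderiv ℝ Φ x (Pi.single (Sum.inl j) 1) (Sum.inl i)

/-- The p-q block of the Jacobian of Φ (∂Φ₁/∂q). -/
noncomputable def blockB (N : ℕ)
    (Φ : ((Fin N ⊕ Fin N) → ℝ) → ((Fin N ⊕ Fin N) → ℝ))
    (x : (Fin N ⊕ Fin N) → ℝ) : Matrix (Fin N) (Fin N) ℝ :=
  Matrix.of fun i j => fderiv ℝ Φ x (Pi.single (Sum.inr j) 1) (Sum.inl i)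

/-- The q-p block of the Jacobian of Φ (∂Φ₂/∂p). -/
noncomputable def blockC (N : ℕ)
    (Φ : ((Fin N ⊕ Fin N) → ℝ) → ((Fin N ⊕ Fin N) → ℝ))
    (x : (Fin N ⊕ Fin N) → ℝ) : Matrix (Fin N) (Fin N) ℝ :=
  Matrix.of fun i j => fderiv ℝ Φ x (Pi.single (Sum.inl j) 1) (Sum.inr i)

/-- The q-q block of the Jacobian of Φ (∂Φ₂/∂q). -/
noncomputable def blockD (N : ℕ)
    (Φ : ((Fin N ⊕ Fin N) → ℝ) → ((Fin N ⊕ Fin N) → ℝ))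
    (x : (Fin N ⊕ Fin N) → ℝ) : Matrix (Fin N) (Fin N) ℝ :=
  Matrix.of fun i j => fderiv ℝ Φ x (Pi.single (Sum.inr j) 1) (Sum.inr i)

theorem symplectic_mixed_block_identity (N : ℕ)
    (Φ : ((Fin N ⊕ Fin N) → ℝ) → ((Fin N ⊕ Fin N) → ℝ))
    (hΦ : ContDiff ℝ (⊤ : ℕ∞) Φ)
    (x₀ : (Fin N ⊕ Fin N) → ℝ)
    (hsymp : jacobian N Φ x₀ * sympJ N * (jacobian N Φ x₀)ᵀ = sympJ N)
    (hA : IsUnit (blockA N Φ x₀)) :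
    ((blockA N Φ x₀)⁻¹)ᵀ =
      -(blockC N Φ x₀ * (blockA N Φ x₀)⁻¹ * blockB N Φ x₀) + blockD N Φ x₀ := by
  set A := blockA N Φ x₀
  set B := blockB N Φ x₀
  set C := blockC N Φ x₀
  set D := blockD N Φ x₀
  have hJ : jacobian N Φ x₀ = Matrix.fromBlocks A B C D := by
    ext i j
    cases i <;> cases j <;> rfl
  rw [hJ, sympJ] at hsymp
  have hsymp' : Matrix.fromBlocks (B * Aᵀ + -A * Bᵀ) (B * Cᵀ + -A * Dᵀ)
      (D * Aᵀ + -C * Bᵀ) (D * Cᵀ + -C * Dᵀ)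
      = Matrix.fromBlocks (0 : Matrix (Fin N) (Fin N) ℝ) (-1) 1 0 := by
    rw [← hsymp, Matrix.fromBlocks_transpose, Matrix.fromBlocks_multiply,
      Matrix.fromBlocks_multiply]
    congr 1 <;> simp
  have h21 : D * Aᵀ + -C * Bᵀ = 1 := by
    have := congrArg Matrix.toBlocks₂₁ hsymp'
    simpa [Matrix.toBlocks_fromBlocks₂₁] using this
  have h11 : B * Aᵀ + -A * Bᵀ = 0 := by
    have := congrArg Matrix.toBlocks₁₁ hsymp'
    simpa [Matrix.toBlocks_fromBlocks₁₁] using this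
  have hBA : B * Aᵀ = A * Bᵀ := by
    have h := h11
    rw [neg_mul] at h
    exact add_neg_eq_zero.mp h
  have hdet : IsUnit A.det := (Matrix.isUnit_iff_isUnit_det A).mp hA
  have hinv : A⁻¹ * A = 1 := Matrix.nonsing_inv_mul A hdet
  have hleft : (-(C * A⁻¹ * B) + D) * Aᵀ = 1 := by
    have : C * A⁻¹ * (B * Aᵀ) = C * Bᵀ := by
      rw [hBA, ← Matrix.mul_assoc, Matrix.mul_assoc C A⁻¹ A, hinv, Matrix.mul_one]
    calc (-(C * A⁻¹ * B) + D) * Aᵀ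
        = -(C * A⁻¹ * (B * Aᵀ)) + D * Aᵀ := by
          rw [Matrix.add_mul, Matrix.neg_mul, Matrix.mul_assoc]
      _ = -(C * Bᵀ) + D * Aᵀ := by rw [this]
      _ = 1 := by rw [← h21, neg_mul]; exact add_comm _ _
  rw [Matrix.transpose_nonsing_inv]
  exact Matrix.inv_eq_left_inv hleft
end
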